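/- arXiv:1109.1064 — 3 statements merged into one kernel-verified Lean document; each statement's English description precedes it below -/
import Mathlib

section
/- For every n ≥ 1 and the semigroup X = C₂⊔Lₙ, the superextension λ(X) is a finite commutative Boolean semigroup whose set of idempotents coincides with λ(X)∖{⟨a⟩}, where a is the unique generator of the subgroup C₂ of X; moreover, 𝓔*⟨a⟩ = ⟨a⟩ for every idempotent 𝓔 of λ(X). -/
open Set

/-- An *upfamily* on `X`: a nonempty family of nonempty subsets of `X`
that is closed under taking supersets. -/
def IsUpfamily {X : Type*} (F : Set (Set X)) : Prop :=
  F.Nonempty ∧ (∀ A ∈ F, A.Nonempty) ∧ ∀ A ∈ F, ∀ B : Set X, A ⊆ B → B ∈ F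

/-- The space `υ(X)` of upfamilies on `X`. -/
def Upfamily (X : Type*) : Type _ := {F : Set (Set X) // IsUpfamily F}

/-- The extension of the binary operation of `X` to families of subsets of `X`:
`𝓐*𝓑 = ⟨⋃_{a ∈ A} a*B_a : A ∈ 𝓐, {B_a}_{a∈A} ⊆ 𝓑⟩`. -/
def upMul {X : Type*} [Mul X] (F G : Set (Set X)) : Set (Set X) :=
  {C | ∃ A ∈ F, ∃ B : X → Set X, (∀ a ∈ A, B a ∈ G) ∧ (⋃ a ∈ A, (fun y => a * y) '' B a) ⊆ C}

theorem IsUpfamily.upMul {X : Type*} [Mul X] {F G : Set (Set X)}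
    (hF : IsUpfamily F) (hG : IsUpfamily G) : IsUpfamily (upMul F G) := by
  obtain ⟨⟨A0, hA0⟩, hFne, hFup⟩ := hF
  obtain ⟨⟨B0, hB0⟩, hGne, hGup⟩ := hG
  refine ⟨⟨univ, A0, hA0, fun _ => B0, fun a _ => hB0, subset_univ _⟩, ?_, ?_⟩
  · rintro C ⟨A, hA, B, hB, hsub⟩
    obtain ⟨a, ha⟩ := hFne A hA
    obtain ⟨b, hb⟩ := hGne (B a) (hB a ha)
    exact ⟨a * b, hsub (mem_biUnion ha ⟨b, hb, rfl⟩)⟩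
  · rintro C ⟨A, hA, B, hB, hsub⟩ D hCD
    exact ⟨A, hA, B, hB, hsub.trans hCD⟩

/-- `υ(X)` is a semigroup under the extended operation. -/
instance {X : Type*} [Mul X] : Mul (Upfamily X) :=
  ⟨fun F G => ⟨upMul F.1 G.1, F.2.upMul G.2⟩⟩

/-- The embedding `X → υ(X)`, `x ↦ ⟨x⟩ = {A ⊆ X : x ∈ A}`. -/
def Upfamily.principal {X : Type*} (x : X) : Upfamily X :=
  ⟨{A | x ∈ A}, ⟨univ, mem_univ x⟩, fun A hA => ⟨x, hA⟩, fun _ hA _ hAB => hAB hA⟩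

/-- An upfamily is linked if any two of its members intersect. -/
def Upfamily.Linked {X : Type*} (F : Upfamily X) : Prop :=
  ∀ A ∈ F.1, ∀ B ∈ F.1, (A ∩ B).Nonempty

/-- Maximal linked upfamilies. -/
def Upfamily.IsMaxLinked {X : Type*} (F : Upfamily X) : Prop :=
  F.Linked ∧ ∀ G : Upfamily X, G.Linked → F.1 ⊆ G.1 → F = G

/-- Filters: upfamilies closed under binary intersections. -/
def Upfamily.IsFilter {X : Type*} (F : Upfamily X) : Prop :=
  ∀ A ∈ F.1, ∀ B ∈ F.1, A ∩ B ∈ F.1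

/-- Ultrafilters: maximal filters. -/
def Upfamily.IsUltrafilter {X : Type*} (F : Upfamily X) : Prop :=
  F.IsFilter ∧ ∀ G : Upfamily X, G.IsFilter → F.1 ⊆ G.1 → F = G

/-- The superextension `λ(X)` of maximal linked upfamilies. -/
def lambdaS (X : Type*) : Set (Upfamily X) := {F | F.IsMaxLinked}

/-- The semigroup `N₂(X)` of linked upfamilies. -/
def N2S (X : Type*) : Set (Upfamily X) := {F | F.Linked}

/-- The semigroup `φ(X)` of filters. -/
def phiS (X : Type*) : Set (Upfamily X) := {F | F.IsFilter}

/-- The Stone-Čech extension `β(X)` of ultrafilters. -/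
def betaS (X : Type*) : Set (Upfamily X) := {F | F.IsUltrafilter}

section SemigroupProps

variable {M : Type*} [Mul M]

/-- A subset closed under multiplication (i.e. a subsemigroup). -/
def mulClosed (S : Set M) : Prop := ∀ a ∈ S, ∀ b ∈ S, a * b ∈ S

/-- The operation is commutative on `S`. -/
def commOn (S : Set M) : Prop := ∀ a ∈ S, ∀ b ∈ S, a * b = b * a

/-- The idempotents of `S` commute. -/
def idemCommOn (S : Set M) : Prop :=
  ∀ a ∈ S, ∀ b ∈ S, a * a = a → b * b = b → a * b = b * a

/-- `S` is an inverse semigroup: every element has a unique inverse in `S`. -/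
def inverseOn (S : Set M) : Prop :=
  ∀ a ∈ S, ∃! b, b ∈ S ∧ a * b * a = a ∧ b * a * b = b

/-- `H` is a subgroup of the ambient multiplicative structure:
it is closed under multiplication and carries a group structure. -/
def IsSubgroupIn (H : Set M) : Prop :=
  (∀ a ∈ H, ∀ b ∈ H, a * b ∈ H) ∧
    ∃ e ∈ H, (∀ a ∈ H, e * a = a ∧ a * e = a) ∧ ∀ a ∈ H, ∃ b ∈ H, a * b = e ∧ b * a = e

/-- `S` is a Clifford semigroup: a union of groups. -/
def cliffordOn (S : Set M) : Prop := ∀ a ∈ S, ∃ H ⊆ S, IsSubgroupIn H ∧ a ∈ H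

/-- `S` is regular in `T`: every `a ∈ S` satisfies `a ∈ a T a`. -/
def regularIn (S T : Set M) : Prop := ∀ a ∈ S, ∃ b ∈ T, a * b * a = a

/-- `ppow a n = a^(n+1)`: positive powers in a semigroup. -/
def ppow (a : M) : ℕ → M
  | 0 => a
  | n + 1 => ppow a n * a

/-- `S` is sub-Clifford: `x^{n+1} = x^{m+1}` implies `x^n = x^m` for positive `n < m`. -/
def subCliffordOn (S : Set M) : Prop :=
  ∀ a ∈ S, ∀ n m : ℕ, n < m → ppow a (n + 1) = ppow a (m + 1) → ppow a n = ppow a m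

end SemigroupProps

/-- The cyclic group `Cₙ` of order `n`. -/
abbrev Cgrp (n : ℕ) : Type := Multiplicative (ZMod n)

/-- The linear semilattice `Lₙ = {0,…,n-1}` with the operation of minimum. -/
def L (n : ℕ) : Type := Fin n

instance {n : ℕ} : Mul (L n) :=
  ⟨fun a b => show Fin n from min (show Fin n from a) (show Fin n from b)⟩

/-- The disjoint ordered union `X ⊔ Y` of two semigroups, in which
`x * y = y * x = x` for `x ∈ X` and `y ∈ Y`. -/
abbrev OSum (A B : Type*) : Type _ := A ⊕ B

instance {A B : Type*} [Mul A] [Mul B] : Mul (OSum A B) :=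
  ⟨fun x y =>
    match x, y with
    | Sum.inl a, Sum.inl a' => Sum.inl (a * a')
    | Sum.inl a, Sum.inr _ => Sum.inl a
    | Sum.inr _, Sum.inl a => Sum.inl a
    | Sum.inr b, Sum.inr b' => Sum.inr (b * b')⟩

/-- `M` is isomorphic to the sub-semigroup `S` of `N`: there is an injective
operation-preserving map of `M` onto `S`. -/
def MulIsoOnto (M : Type*) [Mul M] {N : Type*} [Mul N] (S : Set N) : Prop :=
  ∃ f : M → N, Function.Injective f ∧ Set.range f = S ∧ ∀ x y : M, f (x * y) = f x * f y

/-!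
Every maximal linked upfamily `𝓕 ≠ ⟨a⟩` on `X = C₂ ⊔ Lₙ` contains `X ∖ {a}`, and every
`x ∈ C₂` maps `X ∖ {a}` to the single point `x`; hence the left translates `x⁻¹C` with
`x ∈ C₂` belong to `𝓕` exactly when `x ∈ C`, whatever `𝓕` is. The points `s ∈ Lₙ`
satisfy `s * y ∈ {s, y}`, which makes each such `𝓕` idempotent, and their translates
`s⁻¹C` form a chain, so that an extremal translate decides commutativity. The remaining
element `⟨a⟩` is absorbing for `λ(X) ∖ {⟨a⟩}` and satisfies `⟨a⟩² = ⟨e⟩`.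
-/

namespace Upfamily

variable {X Y : Type*}

lemma ext {F G : Upfamily X} (h : ∀ C, C ∈ F.1 ↔ C ∈ G.1) : F = G :=
  Subtype.ext (Set.ext h)

instance [Finite X] : Finite (Upfamily X) :=
  inferInstanceAs (Finite {F : Set (Set X) // IsUpfamily F})

lemma mem_of_superset (F : Upfamily X) {A B : Set X} (hA : A ∈ F.1) (hAB : A ⊆ B) :
    B ∈ F.1 :=
  F.2.2.2 A hA B hAB

lemma principal_injective : Function.Injective (principal : X → Upfamily X) := by
  intro x y h
  have hx : {x} ∈ (principal y).1 := h ▸ rfl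
  exact hx.symm

lemma IsMaxLinked.mem_of_forall_inter_nonempty {F : Upfamily X} (hF : F.IsMaxLinked)
    {A : Set X} (h : ∀ B ∈ F.1, (A ∩ B).Nonempty) : A ∈ F.1 := by
  obtain ⟨B₀, hB₀⟩ := F.2.1
  have hA : A.Nonempty := (h B₀ hB₀).mono inter_subset_left
  have hGup : IsUpfamily (F.1 ∪ {B | A ⊆ B}) := by
    refine ⟨⟨B₀, .inl hB₀⟩, ?_, ?_⟩
    · rintro B (hB | hB)
      exacts [F.2.2.1 B hB, hA.mono hB]
    · rintro B (hB | hB) D hBD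
      exacts [.inl (F.mem_of_superset hB hBD), .inr (hB.trans hBD)]
  let G : Upfamily X := ⟨_, hGup⟩
  have hG : G.Linked := by
    rintro B (hB | hB) D (hD | hD)
    · exact hF.1 B hB D hD
    · exact (h B hB).mono fun x hx => ⟨hx.2, hD hx.1⟩
    · exact (h D hD).mono fun x hx => ⟨hB hx.1, hx.2⟩
    · exact hA.mono fun x hx => ⟨hB hx, hD hx⟩
  rw [hF.2 G hG subset_union_left]
  exact .inr (Subset.refl A)

lemma IsMaxLinked.exists_disjoint_of_notMem {F : Upfamily X} (hF : F.IsMaxLinked)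
    {A : Set X} (h : A ∉ F.1) : ∃ B ∈ F.1, Disjoint A B := by
  by_contra! hA
  exact h (hF.mem_of_forall_inter_nonempty fun B hB =>
    not_disjoint_iff_nonempty_inter.1 (hA B hB))

lemma IsMaxLinked.eq_principal_of_singleton_mem {F : Upfamily X} (hF : F.IsMaxLinked)
    {x : X} (h : {x} ∈ F.1) : F = principal x :=
  ext fun C => ⟨fun hC => by obtain ⟨y, hyC, rfl⟩ := hF.1 C hC {x} h; exact hyC,
    fun hx => F.mem_of_superset h (singleton_subset_iff.2 hx)⟩

lemma IsMaxLinked.compl_singleton_mem {F : Upfamily X} (hF : F.IsMaxLinked) {x : X}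
    (hFx : F ≠ principal x) : {x}ᶜ ∈ F.1 := by
  refine hF.mem_of_forall_inter_nonempty fun B hB => ?_
  by_contra hB'
  refine hFx (hF.eq_principal_of_singleton_mem (F.mem_of_superset hB fun y hy => ?_))
  by_contra hyx
  exact hB' ⟨y, hyx, hy⟩

/-- If `f` is constant off `x`, the image of any `𝓕 ∈ λ(X) ∖ {⟨x⟩}` under `f` is principal. -/
lemma IsMaxLinked.preimage_mem_iff {F : Upfamily X} (hF : F.IsMaxLinked) {x : X}
    (hFx : F ≠ principal x) {f : X → Y} {z : Y} (hf : ∀ y ≠ x, f y = z) (C : Set Y) :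
    f ⁻¹' C ∈ F.1 ↔ z ∈ C := by
  refine ⟨fun h => ?_, fun hz => F.mem_of_superset (hF.compl_singleton_mem hFx)
    fun y hy => show f y ∈ C from (hf y hy).symm ▸ hz⟩
  by_contra hz
  refine hFx (hF.eq_principal_of_singleton_mem (F.mem_of_superset h fun y hy => ?_))
  by_contra hyx
  exact hz (hf y hyx ▸ hy)

section Mul

variable [Mul X]

def leftDiv (G : Upfamily X) (C : Set X) : Set X := {x | (x * ·) ⁻¹' C ∈ G.1}

lemma mem_mul_iff {F G : Upfamily X} {C : Set X} : C ∈ (F * G).1 ↔ G.leftDiv C ∈ F.1 := by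
  constructor
  · rintro ⟨A, hA, B, hB, hAB⟩
    exact F.mem_of_superset hA fun x hx => G.mem_of_superset (hB x hx)
      fun y hy => hAB (mem_biUnion hx ⟨y, hy, rfl⟩)
  · exact fun h => ⟨_, h, fun x => (x * ·) ⁻¹' C, fun x hx => hx,
      iUnion₂_subset fun x _ => image_preimage_subset _ _⟩

lemma mem_principal_mul_iff {F : Upfamily X} {x : X} {C : Set X} :
    C ∈ (principal x * F).1 ↔ (x * ·) ⁻¹' C ∈ F.1 :=
  mem_mul_iff

lemma mem_mul_principal_iff {F : Upfamily X} {y : X} {C : Set X} :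
    C ∈ (F * principal y).1 ↔ (· * y) ⁻¹' C ∈ F.1 :=
  mem_mul_iff

lemma principal_mul_principal (x y : X) : principal x * principal y = principal (x * y) :=
  ext fun _ => mem_mul_iff

lemma mul_self_eq_self {F : Upfamily X} (h₁ : ∀ C ∈ F.1, C ⊆ F.leftDiv C)
    (h₂ : ∀ C ∉ F.1, F.leftDiv C ⊆ C) : F * F = F :=
  ext fun C => mem_mul_iff.trans
    ⟨fun h => by_contra fun hC => hC (F.mem_of_superset h (h₂ C hC)),
      fun hC => F.mem_of_superset hC (h₁ C hC)⟩

lemma mem_leftDiv_of_mul_eq_or {F : Upfamily X} {x : X} (hx : ∀ y, x * y = x ∨ x * y = y)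
    {C : Set X} (hxC : x ∈ C) (hC : C ∈ F.1) : x ∈ F.leftDiv C :=
  F.mem_of_superset hC fun y hy => by
    rcases hx y with h | h <;> simp only [mem_preimage, h] <;> assumption

lemma IsMaxLinked.mem_of_mem_leftDiv {F : Upfamily X} (hF : F.IsMaxLinked) {x : X}
    (hx : ∀ y, x * y = x ∨ x * y = y) {C : Set X} (h : x ∈ F.leftDiv C) (hC : C ∉ F.1) :
    x ∈ C := by
  obtain ⟨B, hB, hCB⟩ := hF.exists_disjoint_of_notMem hC
  obtain ⟨y, hyC, hyB⟩ := hF.1 _ h B hB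
  rcases hx y with h | h
  · exact h ▸ hyC
  · exact absurd hyB (disjoint_left.1 hCB (h ▸ hyC))

end Mul

end Upfamily

lemma preimage_mul_left_subset_or {M : Type*} [CommSemigroup M]
    (hM : ∀ x y : M, x * y = x ∨ x * y = y) (c : Set M) (s t : M) :
    (s * ·) ⁻¹' c ⊆ (t * ·) ⁻¹' c ∨ (t * ·) ⁻¹' c ⊆ (s * ·) ⁻¹' c := by
  wlog hst : s * t = s generalizing s t
  · exact (this t s ((mul_comm t s).trans ((hM s t).resolve_left hst))).symm
  by_cases hs : s ∈ c
  · refine .inr fun u (hu : t * u ∈ c) => show s * u ∈ c from ?_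
    rw [← hst, mul_assoc]
    rcases hM s (t * u) with h | h <;> rw [h] <;> assumption
  · refine .inl fun u (hu : s * u ∈ c) => show t * u ∈ c from ?_
    have hsu : s * u = u := (hM s u).resolve_left fun h => hs (h ▸ hu)
    rwa [← hsu, ← mul_assoc, mul_comm t, hst]

instance {n : ℕ} : Finite (L n) := inferInstanceAs (Finite (Fin n))

instance {n : ℕ} : CommSemigroup (L n) where
  mul_assoc := min_assoc (α := Fin n)
  mul_comm := min_comm (α := Fin n)

lemma L.mul_eq_or {n : ℕ} (s t : L n) : s * t = s ∨ s * t = t := min_choice (α := Fin n) s t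

abbrev C2SqcupL (n : ℕ) : Type := OSum (Cgrp 2) (L n)

namespace C2SqcupL

open Upfamily

variable {n : ℕ}

/-- The generator `a` of the subgroup `C₂`. -/
abbrev gen : C2SqcupL n := Sum.inl (Multiplicative.ofAdd 1)

lemma eq_one_of_inl_ne {g : Cgrp 2} (hg : (Sum.inl g : C2SqcupL n) ≠ gen) : g = 1 := by
  have : ∀ g : Cgrp 2, g ≠ Multiplicative.ofAdd 1 → g = 1 := by decide
  exact this g fun h => hg (congrArg Sum.inl h)

lemma inl_mul_of_ne (g : Cgrp 2) {y : C2SqcupL n} (hy : y ≠ gen) :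
    Sum.inl g * y = Sum.inl g := by
  cases y with
  | inl h => exact congrArg Sum.inl ((eq_one_of_inl_ne hy).symm ▸ mul_one g)
  | inr t => rfl

lemma mul_gen_of_ne {x : C2SqcupL n} (hx : x ≠ gen) : x * gen = gen := by
  cases x with
  | inl g => exact congrArg Sum.inl ((eq_one_of_inl_ne hx).symm ▸ one_mul _)
  | inr t => rfl

lemma inr_mul_eq_or (s : L n) (y : C2SqcupL n) :
    Sum.inr s * y = Sum.inr s ∨ Sum.inr s * y = y := by
  cases y with
  | inl h => exact .inr rfl
  | inr t => exact (L.mul_eq_or s t).imp (congrArg Sum.inr) (congrArg Sum.inr)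

lemma preimage_inr_mul_subset_or (C : Set (C2SqcupL n)) (s t : L n) :
    (Sum.inr s * ·) ⁻¹' C ⊆ (Sum.inr t * ·) ⁻¹' C ∨
      (Sum.inr t * ·) ⁻¹' C ⊆ (Sum.inr s * ·) ⁻¹' C := by
  have hlift {s t : L n} (h : (s * ·) ⁻¹' (Sum.inr ⁻¹' C) ⊆ (t * ·) ⁻¹' (Sum.inr ⁻¹' C)) :
      (Sum.inr s * ·) ⁻¹' C ⊆ (Sum.inr t * ·) ⁻¹' C := by
    rintro (g | u) hy
    exacts [hy, h hy]
  exact (preimage_mul_left_subset_or L.mul_eq_or _ s t).imp hlift hlift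

variable {F G : Upfamily (C2SqcupL n)}

lemma inl_mem_leftDiv_iff (hG : G.IsMaxLinked) (hGa : G ≠ principal gen)
    {C : Set (C2SqcupL n)} (g : Cgrp 2) : Sum.inl g ∈ G.leftDiv C ↔ Sum.inl g ∈ C :=
  hG.preimage_mem_iff hGa (fun _ => inl_mul_of_ne g) C

lemma mul_self_of_ne (hF : F.IsMaxLinked) (hFa : F ≠ principal gen) : F * F = F := by
  refine mul_self_eq_self (fun C hC x hx => ?_) (fun C hC x hx => ?_)
  · cases x with
    | inl g => exact (inl_mem_leftDiv_iff hF hFa g).2 hx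
    | inr s => exact mem_leftDiv_of_mul_eq_or (inr_mul_eq_or s) hx hC
  · cases x with
    | inl g => exact (inl_mem_leftDiv_iff hF hFa g).1 hx
    | inr s => exact hF.mem_of_mem_leftDiv (inr_mul_eq_or s) hx hC

lemma inl_one_mem_of_forall_inr_notMem (hF : F.IsMaxLinked) (hFa : F ≠ principal gen)
    {A : Set (C2SqcupL n)} (hA : A ∈ F.1) (h : ∀ s, Sum.inr s ∉ A) : Sum.inl 1 ∈ A := by
  obtain ⟨g | s, hne, hx⟩ := hF.1 _ (hF.compl_singleton_mem hFa) A hA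
  · exact eq_one_of_inl_ne hne ▸ hx
  · exact absurd hx (h s)

lemma leftDiv_mem_swap (hF : F.IsMaxLinked) (hG : G.IsMaxLinked) (hFa : F ≠ principal gen)
    (hGa : G ≠ principal gen) {C : Set (C2SqcupL n)} (h : G.leftDiv C ∈ F.1) :
    F.leftDiv C ∈ G.1 := by
  by_contra hFG
  obtain ⟨E, hE, hFE⟩ := hG.exists_disjoint_of_notMem hFG
  have hwit (s : L n) (hs : Sum.inr s ∈ G.leftDiv C) :
      ∃ t, Sum.inr t ∈ E ∧ Sum.inr (s * t) ∈ C := by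
    obtain ⟨y | t, hyC, hyE⟩ := hG.1 _ hs E hE
    · exact absurd hyE (disjoint_left.1 hFE ((inl_mem_leftDiv_iff hF hFa y).2 hyC))
    · exact ⟨t, hyE, hyC⟩
  by_cases hT : ∃ t, Sum.inr t ∈ E
  · -- a translate `t⁻¹C`, `t ∈ E`, that is largest among these cannot lie in `F`
    obtain ⟨t₀, ht₀E, ht₀⟩ : ∃ t₀, Sum.inr t₀ ∈ E ∧
        ∀ t, Sum.inr t ∈ E → (Sum.inr t * ·) ⁻¹' C ⊆ (Sum.inr t₀ * ·) ⁻¹' C := by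
      obtain ⟨t₀, ht₀E, hmax⟩ := Set.Finite.exists_maximalFor
        (fun t : L n => (Sum.inr t * ·) ⁻¹' C) {t | Sum.inr t ∈ E} (Set.toFinite _) hT
      exact ⟨t₀, ht₀E, fun t htE =>
        (preimage_inr_mul_subset_or C t t₀).elim id fun h => hmax htE h⟩
    obtain ⟨B, hB, hB₀⟩ := hF.exists_disjoint_of_notMem (disjoint_right.1 hFE ht₀E)
    obtain ⟨g | s, hz, hzB⟩ := hF.1 _ h B hB
    · have hgC : Sum.inl g ∈ C := (inl_mem_leftDiv_iff hG hGa g).1 hz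
      exact disjoint_left.1 hB₀ hgC hzB
    · obtain ⟨t, htE, hst⟩ := hwit s hz
      refine disjoint_left.1 hB₀ (ht₀ t htE ?_) hzB
      show Sum.inr (t * s) ∈ C
      rwa [mul_comm]
  · -- otherwise both `G.leftDiv C ∈ F` and `E ∈ G` lie in `C₂`, so both contain `e`
    push Not at hT
    have hG₁ := inl_one_mem_of_forall_inr_notMem hF hFa h fun s hs =>
      let ⟨t, htE, _⟩ := hwit s hs; hT t htE
    have hE₁ := inl_one_mem_of_forall_inr_notMem hG hGa hE hT
    refine disjoint_left.1 hFE ?_ hE₁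
    exact (inl_mem_leftDiv_iff hF hFa 1).2 ((inl_mem_leftDiv_iff hG hGa 1).1 hG₁)

lemma mul_comm_of_ne (hF : F.IsMaxLinked) (hG : G.IsMaxLinked) (hFa : F ≠ principal gen)
    (hGa : G ≠ principal gen) : F * G = G * F :=
  ext fun _ => mem_mul_iff.trans <| (Iff.intro (leftDiv_mem_swap hF hG hFa hGa)
    (leftDiv_mem_swap hG hF hGa hFa)).trans mem_mul_iff.symm

lemma mul_principal_gen (hF : F.IsMaxLinked) (hFa : F ≠ principal gen) :
    F * principal gen = principal gen :=
  ext fun C => mem_mul_principal_iff.trans (hF.preimage_mem_iff hFa (fun _ => mul_gen_of_ne) C)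

lemma principal_gen_mul (hF : F.IsMaxLinked) (hFa : F ≠ principal gen) :
    principal gen * F = principal gen :=
  ext fun C => mem_principal_mul_iff.trans (hF.preimage_mem_iff hFa (fun _ => inl_mul_of_ne _) C)

lemma principal_gen_mul_self :
    principal gen * principal gen = principal (Sum.inl 1 : C2SqcupL n) := by
  rw [principal_mul_principal]
  rfl

lemma principal_gen_mul_self_ne :
    principal (gen : C2SqcupL n) * principal gen ≠ principal gen := by
  rw [principal_gen_mul_self]
  exact principal_injective.ne (Sum.inl_injective.ne (by decide))

lemma mul_self_eq_self_iff (hF : F.IsMaxLinked) : F * F = F ↔ F ≠ principal gen :=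
  ⟨fun h ha => by subst ha; exact principal_gen_mul_self_ne h, mul_self_of_ne hF⟩

lemma mul_comm_of_isMaxLinked (hF : F.IsMaxLinked) (hG : G.IsMaxLinked) : F * G = G * F := by
  rcases eq_or_ne F (principal gen) with rfl | hFa <;>
    rcases eq_or_ne G (principal gen) with rfl | hGa
  · rfl
  · rw [principal_gen_mul hG hGa, mul_principal_gen hG hGa]
  · rw [principal_gen_mul hF hFa, mul_principal_gen hF hFa]
  · exact mul_comm_of_ne hF hG hFa hGa

lemma mul_self_mul_self (hF : F.IsMaxLinked) : F * F * F = F := by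
  rcases eq_or_ne F (principal gen) with rfl | hFa
  · rw [principal_gen_mul_self, principal_mul_principal]
    rfl
  · rw [mul_self_of_ne hF hFa, mul_self_of_ne hF hFa]

end C2SqcupL

open C2SqcupL Upfamily in
theorem superextension_C2_sqcup_Ln_boolean_general (n : ℕ) :
    (lambdaS (OSum (Cgrp 2) (L n))).Finite ∧
      commOn (lambdaS (OSum (Cgrp 2) (L n))) ∧
      (∀ F ∈ lambdaS (OSum (Cgrp 2) (L n)), F * F * F = F) ∧
      {F ∈ lambdaS (OSum (Cgrp 2) (L n)) | F * F = F} =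
        lambdaS (OSum (Cgrp 2) (L n)) \
          {Upfamily.principal
            (Sum.inl (Multiplicative.ofAdd (1 : ZMod 2)) : OSum (Cgrp 2) (L n))} ∧
      ∀ F ∈ lambdaS (OSum (Cgrp 2) (L n)), F * F = F →
        F * Upfamily.principal
            (Sum.inl (Multiplicative.ofAdd (1 : ZMod 2)) : OSum (Cgrp 2) (L n)) =
          Upfamily.principal
            (Sum.inl (Multiplicative.ofAdd (1 : ZMod 2)) : OSum (Cgrp 2) (L n)) := by
  refine ⟨toFinite _, fun F hF G hG => mul_comm_of_isMaxLinked hF hG,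
    fun F hF => mul_self_mul_self hF, ?_,
    fun F hF hFF => mul_principal_gen hF ((mul_self_eq_self_iff hF).1 hFF)⟩
  ext F
  exact and_congr_right mul_self_eq_self_iff

/-- Proposition 4.3: for every `n ≥ 1` and `X = C₂ ⊔ Lₙ`, the superextension `λ(X)`
is a finite commutative Boolean semigroup whose set of idempotents is
`λ(X) ∖ {⟨a⟩}`, where `a` is the unique generator of the subgroup `C₂` of `X`;
moreover `𝓔 * ⟨a⟩ = ⟨a⟩` for every idempotent `𝓔` of `λ(X)`. -/
theorem superextension_C2_sqcup_Ln_boolean (n : ℕ) (hn : 1 ≤ n) :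
    (lambdaS (OSum (Cgrp 2) (L n))).Finite ∧
      commOn (lambdaS (OSum (Cgrp 2) (L n))) ∧
      (∀ F ∈ lambdaS (OSum (Cgrp 2) (L n)), F * F * F = F) ∧
      {F ∈ lambdaS (OSum (Cgrp 2) (L n)) | F * F = F} =
        lambdaS (OSum (Cgrp 2) (L n)) \
          {Upfamily.principal
            (Sum.inl (Multiplicative.ofAdd (1 : ZMod 2)) : OSum (Cgrp 2) (L n))} ∧
      ∀ F ∈ lambdaS (OSum (Cgrp 2) (L n)), F * F = F →
        F * Upfamily.principal
            (Sum.inl (Multiplicative.ofAdd (1 : ZMod 2)) : OSum (Cgrp 2) (L n)) =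
          Upfamily.principal
            (Sum.inl (Multiplicative.ofAdd (1 : ZMod 2)) : OSum (Cgrp 2) (L n)) :=
  superextension_C2_sqcup_Ln_boolean_general n
end

section
/- For every n ≥ 1 the semigroup φ(Lₙ⊔C₂) is a commutative Boolean semigroup isomorphic to the reduced product φ(L_{n+1}) ×_{φ(Lₙ)} φ(C₂). -/
open Set

theorem Upfamily.IsFilter.mul {X : Type*} [Mul X] {F G : Upfamily X}
    (hF : F.IsFilter) (hG : G.IsFilter) : (F * G).IsFilter := by
  rintro C1 ⟨A1, hA1, B1, hB1, hs1⟩ C2 ⟨A2, hA2, B2, hB2, hs2⟩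
  refine ⟨A1 ∩ A2, hF A1 hA1 A2 hA2, fun a => B1 a ∩ B2 a,
    fun a ha => hG _ (hB1 a ha.1) _ (hB2 a ha.2), ?_⟩
  rintro x hx
  rw [mem_iUnion₂] at hx
  obtain ⟨a, ha, b, hb, rfl⟩ := hx
  exact ⟨hs1 (mem_biUnion ha.1 ⟨b, hb.1, rfl⟩), hs2 (mem_biUnion ha.2 ⟨b, hb.2, rfl⟩)⟩

/-- The semigroup `φ(X)` of filters on `X`, as a type. -/
def PhiT (X : Type*) : Type _ := {F : Upfamily X // F.IsFilter}

instance {X : Type*} [Mul X] : Mul (PhiT X) :=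
  ⟨fun F G => ⟨F.1 * G.1, F.2.mul G.2⟩⟩

/-- The map `υf : υ(X) → υ(Y)` induced by `f : X → Y`. -/
def upMap {X Y : Type*} (f : X → Y) (F : Upfamily X) : Upfamily Y :=
  ⟨{A : Set Y | f ⁻¹' A ∈ F.1},
    ⟨univ, by obtain ⟨A0, hA0⟩ := F.2.1; exact F.2.2.2 A0 hA0 _ (fun _ _ => trivial)⟩,
    fun A hA => by obtain ⟨x, hx⟩ := F.2.2.1 _ hA; exact ⟨f x, hx⟩,
    fun A hA B hAB => F.2.2.2 _ hA _ (preimage_mono hAB)⟩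

theorem upMap_isFilter {X Y : Type*} (f : X → Y) {F : Upfamily X} (hF : F.IsFilter) :
    (upMap f F).IsFilter := by
  intro A hA B hB
  have : f ⁻¹' (A ∩ B) ∈ F.1 := by rw [preimage_inter]; exact hF _ hA _ hB
  exact this

/-- The embedding `φ(Lₙ) → φ(L_{n+1})` induced by the inclusion `Lₙ ⊆ L_{n+1}`. -/
def embPhi (n : ℕ) (F : PhiT (L n)) : PhiT (L (n + 1)) :=
  ⟨upMap (fun a : L n => show L (n + 1) from Fin.castSucc (show Fin n from a)) F.1,
    upMap_isFilter _ F.2⟩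

/-- The reduced product `X ×_I Y` of semigroups `X`, `Y` over an ideal `I ⊆ X`. -/
def ReducedProd (M N : Type*) [Mul M] [Mul N] (I : Set M)
    (_hI : ∀ a b : M, a ∈ I ∨ b ∈ I → a * b ∈ I) : Type _ :=
  ↥I ⊕ ({a : M // a ∉ I} × N)

open scoped Classical in
noncomputable instance {M N : Type*} [Mul M] [Mul N] {I : Set M}
    {hI : ∀ a b : M, a ∈ I ∨ b ∈ I → a * b ∈ I} : Mul (ReducedProd M N I hI) :=
  ⟨fun u v =>
    match u, v with
    | Sum.inl a, Sum.inl b => Sum.inl ⟨a.1 * b.1, hI _ _ (Or.inl a.2)⟩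
    | Sum.inl a, Sum.inr bx => Sum.inl ⟨a.1 * bx.1.1, hI _ _ (Or.inl a.2)⟩
    | Sum.inr ax, Sum.inl b => Sum.inl ⟨ax.1.1 * b.1, hI _ _ (Or.inr b.2)⟩
    | Sum.inr ax, Sum.inr bx =>
        if h : ax.1.1 * bx.1.1 ∈ I then Sum.inl ⟨ax.1.1 * bx.1.1, h⟩
        else Sum.inr (⟨ax.1.1 * bx.1.1, h⟩, ax.2 * bx.2)⟩

/-!
On a finite semigroup `X` every filter is the principal filter of its kernel `⋂ F`, and the
kernel of `F * G` is the pointwise product of the kernels, so `φ(X)` is the semigroup of nonempty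
subsets of `X`. The semigroup `Lₙ ⊔ C₂` is commutative, satisfies `x³ = x`, and every product
`xyz` in it is one of `x, y, z`; the last two facts give `K³ = K` for every kernel `K`.
For the isomorphism, split a kernel in `Lₙ ⊔ C₂` into its parts in `Lₙ` and in `C₂`, and a kernel
in `L_{n+1}` into its part in `Lₙ` and whether it contains the top element `n`; the filters of the
ideal `φ(Lₙ)` are those whose kernel misses `n`. The top element acts on `Lₙ` by multiplication
exactly as every element of `C₂` does, so the map `(G, H) ↦ (ker G ∩ Lₙ) ⊔ ker H`,
`G ↦ ker G ⊔ ∅` is multiplicative.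
-/

namespace PhiT

variable {X : Type*}

def ker (F : PhiT X) : Set X := ⋂₀ F.1.1

def principal (K : Set X) (hK : K.Nonempty) : PhiT X :=
  ⟨⟨{A | K ⊆ A}, ⟨univ, subset_univ K⟩, fun _ hA => hK.mono hA, fun _ hA _ hAB => hA.trans hAB⟩,
    fun _ hA _ hB => subset_inter hA hB⟩

def toFilter (F : PhiT X) : Filter X where
  sets := F.1.1
  univ_sets := let ⟨A, hA⟩ := F.1.2.1; F.1.2.2.2 A hA univ (subset_univ A)
  sets_of_superset hA hAB := F.1.2.2.2 _ hA _ hAB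
  inter_sets hA hB := F.2 _ hA _ hB

theorem ker_eq_of_forall_mem_iff {F : PhiT X} {K : Set X} (h : ∀ A, A ∈ F.1.1 ↔ K ⊆ A) :
    F.ker = K :=
  subset_antisymm (sInter_subset_of_mem ((h K).2 subset_rfl)) (subset_sInter fun A hA => (h A).1 hA)

@[simp]
theorem ker_principal (K : Set X) (hK : K.Nonempty) : (principal K hK).ker = K :=
  ker_eq_of_forall_mem_iff fun _ => Iff.rfl

variable [Finite X]

theorem ker_mem (F : PhiT X) : F.ker ∈ F.1.1 :=
  (Filter.sInter_mem (f := F.toFilter) (toFinite F.1.1)).2 fun _ hU => hU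

theorem mem_iff_ker_subset (F : PhiT X) {A : Set X} : A ∈ F.1.1 ↔ F.ker ⊆ A :=
  ⟨sInter_subset_of_mem, F.1.2.2.2 _ F.ker_mem A⟩

theorem ker_nonempty (F : PhiT X) : F.ker.Nonempty :=
  F.1.2.2.1 _ F.ker_mem

theorem ker_injective : Function.Injective (ker : PhiT X → Set X) := by
  intro F G h
  apply Subtype.ext; apply Subtype.ext; ext A
  rw [F.mem_iff_ker_subset, G.mem_iff_ker_subset, h]

theorem ker_mul [Mul X] (F G : PhiT X) : (F * G).ker = image2 (· * ·) F.ker G.ker := by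
  refine ker_eq_of_forall_mem_iff fun C => ⟨?_, fun h => ?_⟩
  · rintro ⟨A, hA, B, hB, hsub⟩ _ ⟨a, ha, b, hb, rfl⟩
    have ha' : a ∈ A := F.mem_iff_ker_subset.1 hA ha
    exact hsub (mem_biUnion ha' ⟨b, G.mem_iff_ker_subset.1 (hB a ha') hb, rfl⟩)
  · refine ⟨F.ker, F.ker_mem, fun _ => G.ker, fun _ _ => G.ker_mem, ?_⟩
    simp only [iUnion_subset_iff, image_subset_iff]
    exact fun a ha b hb => h ⟨a, ha, b, hb, rfl⟩

theorem mul_comm_of_forall [Mul X] (hX : ∀ x y : X, x * y = y * x) (F G : PhiT X) :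
    F * G = G * F :=
  ker_injective <| by rw [ker_mul, ker_mul, image2_swap]; simp only [hX]

theorem mul_mul_self_of_forall [Mul X] (hcube : ∀ x : X, x * x * x = x)
    (hsel : ∀ x y z : X, x * y * z ∈ ({x, y, z} : Set X)) (F : PhiT X) : F * F * F = F := by
  refine ker_injective (subset_antisymm ?_ fun x hx => ?_)
  · rw [ker_mul, ker_mul]
    rintro _ ⟨_, ⟨x, hx, y, hy, rfl⟩, z, hz, rfl⟩
    have h := hsel x y z
    simp only [mem_insert_iff, mem_singleton_iff] at h
    show x * y * z ∈ F.ker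
    rcases h with h | h | h <;> rw [h] <;> assumption
  · rw [ker_mul, ker_mul]
    exact ⟨x * x, ⟨x, hx, x, hx, rfl⟩, x, hx, hcube x⟩

def kerOption : Option (PhiT X) → Set X := fun o => o.elim ∅ ker

theorem kerOption_nonempty_iff {o : Option (PhiT X)} : (kerOption o).Nonempty ↔ o.isSome := by
  cases o
  · simp [kerOption]
  · simpa [kerOption] using ker_nonempty _

theorem kerOption_injective : Function.Injective (kerOption : Option (PhiT X) → Set X) := by
  rintro (_ | F) (_ | G) h
  · rfl
  · exact absurd (kerOption_nonempty_iff.2 rfl) (by rw [← h]; simp [kerOption])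
  · exact absurd (kerOption_nonempty_iff.2 rfl) (by rw [h]; simp [kerOption])
  · exact congrArg some (ker_injective h)

theorem kerOption_map₂_mul [Mul X] (o o' : Option (PhiT X)) :
    kerOption (Option.map₂ (· * ·) o o') = image2 (· * ·) (kerOption o) (kerOption o') := by
  cases o <;> cases o' <;> simp [kerOption, ker_mul]

end PhiT

namespace L

variable {n : ℕ}

instance : LinearOrder (L n) := inferInstanceAs (LinearOrder (Fin n))

instance : Finite (L n) := inferInstanceAs (Finite (Fin n))

theorem mul_def (a b : L n) : a * b = min a b := rfl

theorem mul_comm (a b : L n) : a * b = b * a := min_comm a b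

theorem mul_eq_or_s18 (a b : L n) : a * b = a ∨ a * b = b := min_choice a b

theorem mul_mul_self (a : L n) : a * a * a = a := by simp only [mul_def, min_self]

def castSucc : L n → L (n + 1) := Fin.castSucc

def last (n : ℕ) : L (n + 1) := Fin.last n

theorem castSucc_injective : Function.Injective (castSucc : L n → L (n + 1)) :=
  Fin.castSucc_injective n

theorem castSucc_ne_last (a : L n) : castSucc a ≠ last n :=
  Fin.castSucc_ne_last a

theorem eq_castSucc_or_eq_last (x : L (n + 1)) : (∃ a, x = castSucc a) ∨ x = last n :=
  Fin.eq_castSucc_or_eq_last x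

theorem castSucc_mul (a b : L n) : castSucc (a * b) = castSucc a * castSucc b :=
  Fin.castSuccOrderEmb.monotone.map_min

theorem mul_last (x : L (n + 1)) : x * last n = x := min_eq_left (Fin.le_last x)

theorem last_mul (x : L (n + 1)) : last n * x = x := min_eq_right (Fin.le_last x)

theorem mul_eq_last_iff {x y : L (n + 1)} : x * y = last n ↔ x = last n ∧ y = last n := by
  refine ⟨fun h => ?_, fun ⟨hx, hy⟩ => by rw [hx, hy, mul_last]⟩
  rcases mul_eq_or_s18 x y with hx | hy
  · exact ⟨hx ▸ h, le_antisymm (Fin.le_last y) (h ▸ min_le_right x y)⟩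
  · exact ⟨le_antisymm (Fin.le_last x) (h ▸ min_le_left x y), hy ▸ h⟩

theorem ext_of_preimage_castSucc {K K' : Set (L (n + 1))}
    (h : castSucc ⁻¹' K = castSucc ⁻¹' K') (hlast : last n ∈ K ↔ last n ∈ K') : K = K' := by
  ext x
  rcases eq_castSucc_or_eq_last x with ⟨a, rfl⟩ | rfl
  exacts [Set.ext_iff.1 h a, hlast]

theorem last_mem_image2_iff {K K' : Set (L (n + 1))} :
    last n ∈ image2 (· * ·) K K' ↔ last n ∈ K ∧ last n ∈ K' := by
  refine ⟨?_, fun ⟨h, h'⟩ => ⟨_, h, _, h', mul_last _⟩⟩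
  rintro ⟨x, hx, y, hy, hxy⟩
  obtain ⟨rfl, rfl⟩ := mul_eq_last_iff.1 hxy
  exact ⟨hx, hy⟩

theorem castSucc_mem_image2_iff {K K' : Set (L (n + 1))} {a : L n} :
    castSucc a ∈ image2 (· * ·) K K' ↔
      (∃ a₁, castSucc a₁ ∈ K ∧ ∃ a₂, castSucc a₂ ∈ K' ∧ a₁ * a₂ = a) ∨
        (castSucc a ∈ K ∧ last n ∈ K') ∨ (last n ∈ K ∧ castSucc a ∈ K') := by
  constructor
  · rintro ⟨x, hx, y, hy, hxy : x * y = castSucc a⟩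
    rcases eq_castSucc_or_eq_last x with ⟨a₁, rfl⟩ | rfl <;>
      rcases eq_castSucc_or_eq_last y with ⟨a₂, rfl⟩ | rfl
    · rw [← castSucc_mul] at hxy
      exact Or.inl ⟨a₁, hx, a₂, hy, castSucc_injective hxy⟩
    · rw [mul_last] at hxy
      exact Or.inr (Or.inl ⟨hxy ▸ hx, hy⟩)
    · rw [last_mul] at hxy
      exact Or.inr (Or.inr ⟨hx, hxy ▸ hy⟩)
    · exact absurd (hxy.symm.trans (mul_last _)) (castSucc_ne_last a)
  · rintro (⟨a₁, h₁, a₂, h₂, rfl⟩ | ⟨h, hl⟩ | ⟨hl, h⟩)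
    exacts [⟨_, h₁, _, h₂, (castSucc_mul a₁ a₂).symm⟩, ⟨_, h, _, hl, mul_last _⟩,
      ⟨_, hl, _, h, last_mul _⟩]

end L

namespace OSum

variable {A B : Type*} [Mul A] [Mul B]

@[simp] theorem inl_mul_inl (a a' : A) : (Sum.inl a : OSum A B) * Sum.inl a' = Sum.inl (a * a') :=
  rfl

@[simp] theorem inl_mul_inr (a : A) (b : B) : (Sum.inl a : OSum A B) * Sum.inr b = Sum.inl a := rfl

@[simp] theorem inr_mul_inl (b : B) (a : A) : (Sum.inr b : OSum A B) * Sum.inl a = Sum.inl a := rfl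

@[simp] theorem inr_mul_inr (b b' : B) : (Sum.inr b : OSum A B) * Sum.inr b' = Sum.inr (b * b') :=
  rfl

theorem mul_comm_of_forall (hA : ∀ a a' : A, a * a' = a' * a) (hB : ∀ b b' : B, b * b' = b' * b)
    (x y : OSum A B) : x * y = y * x := by
  rcases x with a | b <;> rcases y with a' | b' <;> simp [hA, hB]

theorem mul_mul_self_of_forall (hA : ∀ a : A, a * a * a = a) (hB : ∀ b : B, b * b * b = b)
    (x : OSum A B) : x * x * x = x := by
  rcases x with a | b <;> simp [hA, hB]

theorem mul_mul_mem_of_forall (hA : ∀ a a' : A, a * a' = a ∨ a * a' = a')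
    (hB : ∀ b b' b'' : B, b * b' * b'' ∈ ({b, b', b''} : Set B)) (x y z : OSum A B) :
    x * y * z ∈ ({x, y, z} : Set (OSum A B)) := by
  rcases x with a | b <;> rcases y with a' | b' <;> rcases z with a'' | b'' <;>
    simp only [inl_mul_inl, inl_mul_inr, inr_mul_inl, inr_mul_inr, mem_insert_iff,
      mem_singleton_iff, Sum.inl.injEq, Sum.inr.injEq, reduceCtorEq, or_false, false_or, or_self,
      or_true, hA]
  · rcases hA (a * a') a'' with h | h <;> rw [h]
    · rcases hA a a' with h' | h' <;> simp [h']
    · simp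
  · simpa using hB b b' b''

theorem inl_mem_image2_iff {S T : Set (OSum A B)} {a : A} :
    Sum.inl a ∈ image2 (· * ·) S T ↔
      (∃ a₁, Sum.inl a₁ ∈ S ∧ ∃ a₂, Sum.inl a₂ ∈ T ∧ a₁ * a₂ = a) ∨
        (Sum.inl a ∈ S ∧ ∃ b, Sum.inr b ∈ T) ∨ ((∃ b, Sum.inr b ∈ S) ∧ Sum.inl a ∈ T) := by
  constructor
  · rintro ⟨a₁ | b₁, h₁, a₂ | b₂, h₂, h⟩ <;> simp only [inl_mul_inl, inl_mul_inr, inr_mul_inl,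
      inr_mul_inr, Sum.inl.injEq, reduceCtorEq] at h
    · exact Or.inl ⟨a₁, h₁, a₂, h₂, h⟩
    · exact Or.inr (Or.inl ⟨h ▸ h₁, b₂, h₂⟩)
    · exact Or.inr (Or.inr ⟨⟨b₁, h₁⟩, h ▸ h₂⟩)
  · rintro (⟨a₁, h₁, a₂, h₂, rfl⟩ | ⟨h, b, hb⟩ | ⟨⟨b, hb⟩, h⟩)
    exacts [⟨_, h₁, _, h₂, rfl⟩, ⟨_, h, _, hb, rfl⟩, ⟨_, hb, _, h, rfl⟩]

theorem inr_mem_image2_iff {S T : Set (OSum A B)} {b : B} :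
    Sum.inr b ∈ image2 (· * ·) S T ↔ ∃ b₁, Sum.inr b₁ ∈ S ∧ ∃ b₂, Sum.inr b₂ ∈ T ∧ b₁ * b₂ = b := by
  constructor
  · rintro ⟨a₁ | b₁, h₁, a₂ | b₂, h₂, h⟩ <;> simp only [inl_mul_inl, inl_mul_inr, inr_mul_inl,
      inr_mul_inr, Sum.inr.injEq, reduceCtorEq] at h
    exact ⟨b₁, h₁, b₂, h₂, h⟩
  · rintro ⟨b₁, h₁, b₂, h₂, rfl⟩
    exact ⟨_, h₁, _, h₂, rfl⟩

end OSum

namespace ReducedProd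

variable {M N : Type*} [Mul M] [Mul N] {I : Set M} {hI : ∀ a b : M, a ∈ I ∨ b ∈ I → a * b ∈ I}

def fst : ReducedProd M N I hI → M
  | Sum.inl a => a
  | Sum.inr x => x.1

def snd : ReducedProd M N I hI → Option N
  | Sum.inl _ => none
  | Sum.inr x => some x.2

theorem ext {u v : ReducedProd M N I hI} (hfst : u.fst = v.fst) (hsnd : u.snd = v.snd) :
    u = v := by
  rcases u with a | x <;> rcases v with b | y
  · exact congrArg Sum.inl (Subtype.ext hfst)
  · cases hsnd
  · cases hsnd
  · exact congrArg Sum.inr (Prod.ext (Subtype.ext hfst) (Option.some_injective _ hsnd))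

theorem snd_eq_none_iff (u : ReducedProd M N I hI) : u.snd = none ↔ u.fst ∈ I := by
  rcases u with a | x
  · exact iff_of_true rfl a.2
  · exact iff_of_false (Option.some_ne_none _) x.1.2

theorem inr_mul_inr_of_mem {x y : {a : M // a ∉ I} × N} (h : x.1.1 * y.1.1 ∈ I) :
    (show ReducedProd M N I hI from Sum.inr x) * (show ReducedProd M N I hI from Sum.inr y) =
      show ReducedProd M N I hI from Sum.inl ⟨_, h⟩ :=
  dif_pos h

theorem inr_mul_inr_of_notMem {x y : {a : M // a ∉ I} × N} (h : x.1.1 * y.1.1 ∉ I) :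
    (show ReducedProd M N I hI from Sum.inr x) * (show ReducedProd M N I hI from Sum.inr y) =
      show ReducedProd M N I hI from Sum.inr (⟨_, h⟩, x.2 * y.2) :=
  dif_neg h

theorem fst_mul (u v : ReducedProd M N I hI) : (u * v).fst = u.fst * v.fst := by
  rcases u with a | x <;> rcases v with b | y
  iterate 3 rfl
  by_cases h : x.1.1 * y.1.1 ∈ I
  · rw [inr_mul_inr_of_mem h]; rfl
  · rw [inr_mul_inr_of_notMem h]; rfl

theorem snd_mul (hcompl : ∀ a b : M, a ∉ I → b ∉ I → a * b ∉ I) (u v : ReducedProd M N I hI) :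
    (u * v).snd = Option.map₂ (· * ·) u.snd v.snd := by
  rcases u with a | x <;> rcases v with b | y
  iterate 3 rfl
  rw [inr_mul_inr_of_notMem (hcompl _ _ x.1.2 y.1.2)]
  rfl

end ReducedProd

section embPhi

variable (n : ℕ)

theorem ker_embPhi (F : PhiT (L n)) : (embPhi n F).ker = L.castSucc '' F.ker :=
  PhiT.ker_eq_of_forall_mem_iff fun A =>
    (F.mem_iff_ker_subset (A := L.castSucc ⁻¹' A)).trans image_subset_iff.symm

variable {n} in
theorem mem_range_embPhi_iff {G : PhiT (L (n + 1))} :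
    G ∈ range (embPhi n) ↔ L.last n ∉ G.ker := by
  constructor
  · rintro ⟨F, rfl⟩ h
    rw [ker_embPhi] at h
    obtain ⟨a, -, ha⟩ := h
    exact L.castSucc_ne_last a ha
  · intro h
    obtain ⟨x, hx⟩ := G.ker_nonempty
    obtain ⟨a, rfl⟩ := (L.eq_castSucc_or_eq_last x).resolve_right (by rintro rfl; exact h hx)
    have hne : (L.castSucc ⁻¹' G.ker).Nonempty := ⟨a, hx⟩
    refine ⟨PhiT.principal _ hne, PhiT.ker_injective ?_⟩
    rw [ker_embPhi, PhiT.ker_principal]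
    refine L.ext_of_preimage_castSucc (preimage_image_eq _ L.castSucc_injective)
      (iff_of_false ?_ h)
    rintro ⟨b, -, hb⟩
    exact L.castSucc_ne_last b hb

theorem mul_mem_range_embPhi : ∀ a b : PhiT (L (n + 1)),
    a ∈ range (embPhi n) ∨ b ∈ range (embPhi n) → a * b ∈ range (embPhi n) := by
  simp only [mem_range_embPhi_iff, PhiT.ker_mul, L.last_mem_image2_iff]
  tauto

theorem mul_notMem_range_embPhi : ∀ a b : PhiT (L (n + 1)),
    a ∉ range (embPhi n) → b ∉ range (embPhi n) → a * b ∉ range (embPhi n) := by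
  simp only [mem_range_embPhi_iff, PhiT.ker_mul, L.last_mem_image2_iff]
  tauto

end embPhi

section FilterReducedProd

variable (n : ℕ) (Y : Type*) [Mul Y]

abbrev FilterReducedProd : Type _ :=
  ReducedProd (PhiT (L (n + 1))) (PhiT Y) (range (embPhi n)) (mul_mem_range_embPhi n)

variable {n Y} [Finite Y]

theorem last_mem_ker_fst_iff (u : FilterReducedProd n Y) :
    L.last n ∈ u.fst.ker ↔ (PhiT.kerOption u.snd).Nonempty := by
  rw [PhiT.kerOption_nonempty_iff, ← not_iff_not, ← mem_range_embPhi_iff,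
    ← ReducedProd.snd_eq_none_iff, Option.not_isSome_iff_eq_none]

theorem kerOption_snd_mul (u v : FilterReducedProd n Y) :
    PhiT.kerOption (u * v).snd = image2 (· * ·) (PhiT.kerOption u.snd) (PhiT.kerOption v.snd) := by
  rw [ReducedProd.snd_mul (mul_notMem_range_embPhi n), PhiT.kerOption_map₂_mul]

def osumKer (u : FilterReducedProd n Y) : Set (OSum (L n) Y) :=
  Sum.elim (fun a => L.castSucc a ∈ u.fst.ker) (· ∈ PhiT.kerOption u.snd)

theorem osumKer_nonempty (u : FilterReducedProd n Y) : (osumKer u).Nonempty := by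
  obtain ⟨x, hx⟩ := u.fst.ker_nonempty
  rcases L.eq_castSucc_or_eq_last x with ⟨a, rfl⟩ | rfl
  · exact ⟨Sum.inl a, hx⟩
  · obtain ⟨b, hb⟩ := (last_mem_ker_fst_iff u).1 hx
    exact ⟨Sum.inr b, hb⟩

def reducedProdToPhi (u : FilterReducedProd n Y) : PhiT (OSum (L n) Y) :=
  PhiT.principal (osumKer u) (osumKer_nonempty u)

theorem reducedProdToPhi_mul (u v : FilterReducedProd n Y) :
    reducedProdToPhi (u * v) = reducedProdToPhi u * reducedProdToPhi v := by
  refine PhiT.ker_injective ?_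
  simp only [reducedProdToPhi, PhiT.ker_mul, PhiT.ker_principal]
  ext (a | b)
  · show L.castSucc a ∈ (u * v).fst.ker ↔ _
    rw [ReducedProd.fst_mul, PhiT.ker_mul, L.castSucc_mem_image2_iff, OSum.inl_mem_image2_iff,
      last_mem_ker_fst_iff, last_mem_ker_fst_iff]
    rfl
  · show b ∈ PhiT.kerOption (u * v).snd ↔ _
    rw [kerOption_snd_mul, OSum.inr_mem_image2_iff]
    rfl

theorem reducedProdToPhi_injective :
    Function.Injective (reducedProdToPhi : FilterReducedProd n Y → PhiT (OSum (L n) Y)) := by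
  intro u v huv
  have hK : osumKer u = osumKer v := by
    simpa only [reducedProdToPhi, PhiT.ker_principal] using congrArg PhiT.ker huv
  have hsnd : PhiT.kerOption u.snd = PhiT.kerOption v.snd := congrArg (Sum.inr ⁻¹' ·) hK
  have hfst : L.castSucc ⁻¹' u.fst.ker = L.castSucc ⁻¹' v.fst.ker := congrArg (Sum.inl ⁻¹' ·) hK
  refine ReducedProd.ext (PhiT.ker_injective (L.ext_of_preimage_castSucc hfst ?_))
    (PhiT.kerOption_injective hsnd)
  rw [last_mem_ker_fst_iff, last_mem_ker_fst_iff, hsnd]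

theorem reducedProdToPhi_surjective :
    Function.Surjective (reducedProdToPhi : FilterReducedProd n Y → PhiT (OSum (L n) Y)) := by
  intro F
  set s : Set (L n) := Sum.inl ⁻¹' F.ker
  set t : Set Y := Sum.inr ⁻¹' F.ker
  suffices ∃ u : FilterReducedProd n Y,
      L.castSucc ⁻¹' u.fst.ker = s ∧ PhiT.kerOption u.snd = t by
    obtain ⟨u, hs, ht⟩ := this
    refine ⟨u, PhiT.ker_injective ?_⟩
    rw [reducedProdToPhi, PhiT.ker_principal]
    ext (a | b)
    exacts [Set.ext_iff.1 hs a, Set.ext_iff.1 ht b]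
  have hlast : L.last n ∉ L.castSucc '' s := fun ⟨a, _, ha⟩ => L.castSucc_ne_last a ha
  rcases t.eq_empty_or_nonempty with ht | ht
  · have hs : s.Nonempty := by
      obtain ⟨a | b, hx⟩ := F.ker_nonempty
      exacts [⟨a, hx⟩, absurd (show b ∈ t from hx) (ht ▸ notMem_empty b)]
    refine ⟨Sum.inl ⟨PhiT.principal _ (hs.image L.castSucc), mem_range_embPhi_iff.2 ?_⟩, ?_, ht.symm⟩
    · rwa [PhiT.ker_principal]
    · show L.castSucc ⁻¹' (PhiT.principal _ (hs.image L.castSucc)).ker = s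
      rw [PhiT.ker_principal, preimage_image_eq _ L.castSucc_injective]
  · refine ⟨Sum.inr (⟨PhiT.principal (insert (L.last n) (L.castSucc '' s)) (insert_nonempty _ _),
      fun h => mem_range_embPhi_iff.1 h ?_⟩, PhiT.principal t ht), ?_, PhiT.ker_principal t ht⟩
    · exact (PhiT.ker_principal _ _).symm ▸ mem_insert _ _
    · ext a
      show L.castSucc a ∈ (PhiT.principal _ (insert_nonempty _ _)).ker ↔ a ∈ s
      rw [PhiT.ker_principal, mem_insert_iff, L.castSucc_injective.mem_set_image]
      exact or_iff_right (L.castSucc_ne_last a)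

noncomputable def reducedProdMulEquiv : FilterReducedProd n Y ≃* PhiT (OSum (L n) Y) :=
  MulEquiv.mk (Equiv.ofBijective _ ⟨reducedProdToPhi_injective, reducedProdToPhi_surjective⟩)
    reducedProdToPhi_mul

end FilterReducedProd

theorem filters_of_Ln_sqcup_C2_reduced_product_general (n : ℕ) :
    (∀ F G : PhiT (OSum (L n) (Cgrp 2)), F * G = G * F) ∧
      (∀ F : PhiT (OSum (L n) (Cgrp 2)), F * F * F = F) ∧
      ∃ hI : ∀ a b : PhiT (L (n + 1)),
          a ∈ Set.range (embPhi n) ∨ b ∈ Set.range (embPhi n) →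
            a * b ∈ Set.range (embPhi n),
        Nonempty
          (ReducedProd (PhiT (L (n + 1))) (PhiT (Cgrp 2)) (Set.range (embPhi n)) hI ≃*
            PhiT (OSum (L n) (Cgrp 2))) := by
  have hC₂_cube : ∀ x : Cgrp 2, x * x * x = x := by decide
  have hC₂_mul_mul_mem : ∀ x y z : Cgrp 2, x * y * z ∈ ({x, y, z} : Set (Cgrp 2)) := by decide
  refine ⟨PhiT.mul_comm_of_forall (OSum.mul_comm_of_forall L.mul_comm mul_comm),
    PhiT.mul_mul_self_of_forall (OSum.mul_mul_self_of_forall L.mul_mul_self hC₂_cube)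
      (OSum.mul_mul_mem_of_forall L.mul_eq_or_s18 hC₂_mul_mul_mem),
    mul_mem_range_embPhi n, ⟨reducedProdMulEquiv⟩⟩

/-- Proposition 4.8(2): for every `n ≥ 1`, the semigroup `φ(Lₙ ⊔ C₂)` is a
commutative Boolean semigroup isomorphic to the reduced product
`φ(L_{n+1}) ×_{φ(Lₙ)} φ(C₂)`, where `φ(Lₙ)` is identified with an ideal of
`φ(L_{n+1})` via the embedding induced by the inclusion `Lₙ ⊆ L_{n+1}`. -/
theorem filters_of_Ln_sqcup_C2_reduced_product (n : ℕ) (hn : 1 ≤ n) :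
    (∀ F G : PhiT (OSum (L n) (Cgrp 2)), F * G = G * F) ∧
      (∀ F : PhiT (OSum (L n) (Cgrp 2)), F * F * F = F) ∧
      ∃ hI : ∀ a b : PhiT (L (n + 1)),
          a ∈ Set.range (embPhi n) ∨ b ∈ Set.range (embPhi n) →
            a * b ∈ Set.range (embPhi n),
        Nonempty
          (ReducedProd (PhiT (L (n + 1))) (PhiT (Cgrp 2)) (Set.range (embPhi n)) hI ≃*
            PhiT (OSum (L n) (Cgrp 2))) :=
  filters_of_Ln_sqcup_C2_reduced_product_general n
end

section
/- Let X be a semigroup and let x, y be commuting idempotents of X with xy ∉ {x, y}. Then the linked upfamily 𝓛 = ⟨{x,y},{x,xy},{y,xy}⟩ on X satisfies 𝓛 ≠ 𝓛*𝓛 = ⟨{xy}⟩ = 𝓛*𝓛*𝓛, and 𝓛 is not a regular element of the semigroup υ(X) (there is no upfamily 𝓐 ∈ υ(X) with 𝓛*𝓐*𝓛 = 𝓛). -/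
open Set

/-- The maximal linked upfamily `𝓛 = ⟨{x,y},{x,xy},{y,xy}⟩` (as a family of subsets). -/
def triangleFam {X : Type*} [Mul X] (x y : X) : Set (Set X) :=
  {A | ({x, y} : Set X) ⊆ A ∨ ({x, x * y} : Set X) ⊆ A ∨ ({y, x * y} : Set X) ⊆ A}

/-!
Put `z = xy`. On `T = {x, y, z}` the product of two distinct points is `z`, and every member of
`𝓛` contains two points of `T`, hence one different from any prescribed point. So every point
of `T` is sent to `z` by a suitable point of any member of `𝓛`; this gives `𝓛*𝓛 = ⟨z⟩` and
`⟨z⟩*𝓛 = ⟨z⟩`. If `𝓛*𝓐*𝓛 = 𝓛`, then `{x, y} ∈ 𝓛*𝓐*𝓛` yields points `s ≠ b` of `T` and some `c`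
with `t = scb ∈ {x, y}`. As `s` and `b` are idempotent, `st = t = tb`, and since `t ≠ z` this
forces `s = t = b`.
-/

section UpMul

variable {X : Type*} [Mul X]

theorem mem_upMul {F G : Set (Set X)} {C : Set X} :
    C ∈ upMul F G ↔ ∃ A ∈ F, ∀ a ∈ A, ∃ B ∈ G, ∀ b ∈ B, a * b ∈ C := by
  constructor
  · rintro ⟨A, hA, B, hB, hBC⟩
    exact ⟨A, hA, fun a ha => ⟨B a, hB a ha, fun b hb => hBC (mem_biUnion ha ⟨b, hb, rfl⟩)⟩⟩
  · rintro ⟨A, hA, h⟩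
    choose! B hB hBC using h
    refine ⟨A, hA, B, hB, ?_⟩
    simp only [iUnion_subset_iff, image_subset_iff]
    exact hBC

theorem upMul_subset_setOf_mem {F G : Set (Set X)} {z : X}
    (h : ∀ A ∈ F, ∃ a ∈ A, ∀ B ∈ G, ∃ b ∈ B, a * b = z) : upMul F G ⊆ {C | z ∈ C} := by
  intro C hC
  obtain ⟨A, hA, hAC⟩ := mem_upMul.1 hC
  obtain ⟨a, ha, haz⟩ := h A hA
  obtain ⟨B, hB, hBC⟩ := hAC a ha
  obtain ⟨b, hb, rfl⟩ := haz B hB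
  exact hBC b hb

theorem setOf_mem_subset_upMul {F G : Set (Set X)} {A B : Set X} {z : X} (hA : A ∈ F)
    (hB : B ∈ G) (hAB : ∀ a ∈ A, ∀ b ∈ B, a * b = z) : {C | z ∈ C} ⊆ upMul F G :=
  fun _ hC => mem_upMul.2 ⟨A, hA, fun a ha => ⟨B, hB, fun b hb => hAB a ha b hb ▸ hC⟩⟩

theorem isUpfamily_triangleFam (x y : X) : IsUpfamily (triangleFam x y) := by
  refine ⟨⟨{x, y}, Or.inl subset_rfl⟩, ?_, ?_⟩
  · rintro A (h | h | h)
    exacts [⟨x, h (by simp)⟩, ⟨x, h (by simp)⟩, ⟨y, h (by simp)⟩]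
  · rintro A (h | h | h) B hAB
    exacts [Or.inl (h.trans hAB), Or.inr (Or.inl (h.trans hAB)), Or.inr (Or.inr (h.trans hAB))]

theorem triangleFam_linked (x y : X) :
    ∀ A ∈ triangleFam x y, ∀ B ∈ triangleFam x y, (A ∩ B).Nonempty := by
  rintro A (hA | hA | hA) B (hB | hB | hB)
  exacts [⟨x, hA (by simp), hB (by simp)⟩, ⟨x, hA (by simp), hB (by simp)⟩,
    ⟨y, hA (by simp), hB (by simp)⟩, ⟨x, hA (by simp), hB (by simp)⟩,
    ⟨x, hA (by simp), hB (by simp)⟩, ⟨x * y, hA (by simp), hB (by simp)⟩,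
    ⟨y, hA (by simp), hB (by simp)⟩, ⟨x * y, hA (by simp), hB (by simp)⟩,
    ⟨y, hA (by simp), hB (by simp)⟩]

end UpMul

section Triangle

variable {X : Type*} [Semigroup X] {x y : X}

theorem isIdempotentElem_of_mem_triangle (hx : IsIdempotentElem x) (hy : IsIdempotentElem y)
    (hc : Commute x y) {s : X} (hs : s ∈ ({x, y, x * y} : Set X)) : IsIdempotentElem s := by
  rcases hs with rfl | rfl | rfl
  exacts [hx, hy, hx.mul_of_commute hc hy]

theorem mul_eq_of_mem_triangle_of_ne (hx : IsIdempotentElem x) (hy : IsIdempotentElem y)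
    (hc : Commute x y) {s b : X} (hs : s ∈ ({x, y, x * y} : Set X))
    (hb : b ∈ ({x, y, x * y} : Set X)) (hsb : s ≠ b) : s * b = x * y := by
  have hxz : x * (x * y) = x * y := hx.mul_self_mul y
  have hyx : y * x = x * y := hc.eq.symm
  have hyz : y * (x * y) = x * y := by rw [← mul_assoc, hyx, hy.mul_mul_self]
  have hzx : x * y * x = x * y := by rw [mul_assoc, hyx, hx.mul_self_mul]
  have hzy : x * y * y = x * y := hy.mul_mul_self x
  rcases hs with rfl | rfl | rfl <;> rcases hb with rfl | rfl | rfl <;>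
    first | exact absurd rfl hsb | assumption | rfl

theorem exists_mem_triangle_ne_of_mem_triangleFam (hx : IsIdempotentElem x)
    (hnx : x * y ≠ x) (hny : x * y ≠ y) {D : Set X} (hD : D ∈ triangleFam x y) (s : X) :
    ∃ b ∈ D, b ∈ ({x, y, x * y} : Set X) ∧ b ≠ s := by
  have of_pair : ∀ p q, p ∈ D → q ∈ D → p ∈ ({x, y, x * y} : Set X) →
      q ∈ ({x, y, x * y} : Set X) → p ≠ q → ∃ b ∈ D, b ∈ ({x, y, x * y} : Set X) ∧ b ≠ s := by
    intro p q hp hq hpT hqT hpq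
    by_cases hps : p = s
    · exact ⟨q, hq, hqT, hps ▸ hpq.symm⟩
    · exact ⟨p, hp, hpT, hps⟩
  have hxy : x ≠ y := by rintro rfl; exact hnx hx
  rcases hD with h | h | h
  · exact of_pair x y (h (by simp)) (h (by simp)) (by simp) (by simp) hxy
  · exact of_pair x (x * y) (h (by simp)) (h (by simp)) (by simp) (by simp) hnx.symm
  · exact of_pair y (x * y) (h (by simp)) (h (by simp)) (by simp) (by simp) hny.symm

theorem exists_mem_mul_eq_of_mem_triangleFam (hx : IsIdempotentElem x) (hy : IsIdempotentElem y)
    (hc : Commute x y) (hnx : x * y ≠ x) (hny : x * y ≠ y) {s : X}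
    (hs : s ∈ ({x, y, x * y} : Set X)) {D : Set X} (hD : D ∈ triangleFam x y) :
    ∃ b ∈ D, s * b = x * y := by
  obtain ⟨b, hbD, hbT, hbs⟩ := exists_mem_triangle_ne_of_mem_triangleFam hx hnx hny hD s
  exact ⟨b, hbD, mul_eq_of_mem_triangle_of_ne hx hy hc hs hbT hbs.symm⟩

theorem upMul_triangleFam_self (hx : IsIdempotentElem x) (hy : IsIdempotentElem y)
    (hc : Commute x y) (hnx : x * y ≠ x) (hny : x * y ≠ y) :
    upMul (triangleFam x y) (triangleFam x y) = {A : Set X | x * y ∈ A} := by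
  refine subset_antisymm (upMul_subset_setOf_mem fun A hA => ?_)
    (setOf_mem_subset_upMul (A := {x, x * y}) (B := {y, x * y})
      (Or.inr (Or.inl subset_rfl)) (Or.inr (Or.inr subset_rfl)) ?_)
  · obtain ⟨a, ha, haT, -⟩ := exists_mem_triangle_ne_of_mem_triangleFam hx hnx hny hA x
    exact ⟨a, ha, fun B hB => exists_mem_mul_eq_of_mem_triangleFam hx hy hc hnx hny haT hB⟩
  · rintro a (rfl | rfl) b (rfl | rfl)
    exacts [rfl, hx.mul_self_mul y, hy.mul_mul_self x, (hx.mul_of_commute hc hy).eq]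

theorem upMul_setOf_mem_triangleFam (hx : IsIdempotentElem x) (hy : IsIdempotentElem y)
    (hc : Commute x y) (hnx : x * y ≠ x) (hny : x * y ≠ y) :
    upMul {A : Set X | x * y ∈ A} (triangleFam x y) = {A : Set X | x * y ∈ A} := by
  refine subset_antisymm (upMul_subset_setOf_mem fun A hA => ?_)
    (setOf_mem_subset_upMul (A := {x * y}) (B := {x, x * y})
      rfl (Or.inr (Or.inl subset_rfl)) ?_)
  · exact ⟨x * y, hA, fun B hB => exists_mem_mul_eq_of_mem_triangleFam hx hy hc hnx hny
      (by simp) hB⟩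
  · rintro a rfl b (rfl | rfl)
    exacts [mul_eq_of_mem_triangle_of_ne hx hy hc (by simp) (by simp) hnx,
      (hx.mul_of_commute hc hy).eq]

theorem triangleFam_ne_upMul_self (hx : IsIdempotentElem x) (hy : IsIdempotentElem y)
    (hc : Commute x y) (hnx : x * y ≠ x) (hny : x * y ≠ y) :
    triangleFam x y ≠ upMul (triangleFam x y) (triangleFam x y) := by
  intro h
  have hxy : ({x, y} : Set X) ∈ upMul (triangleFam x y) (triangleFam x y) :=
    h ▸ Or.inl subset_rfl
  rw [upMul_triangleFam_self hx hy hc hnx hny] at hxy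
  rcases hxy with h | h
  exacts [hnx h, hny h]

theorem upMul_upMul_triangleFam_ne (hx : IsIdempotentElem x) (hy : IsIdempotentElem y)
    (hc : Commute x y) (hnx : x * y ≠ x) (hny : x * y ≠ y) {A : Set (Set X)}
    (hA : IsUpfamily A) : upMul (upMul (triangleFam x y) A) (triangleFam x y) ≠ triangleFam x y := by
  intro h
  have hxy : ({x, y} : Set X) ∈ upMul (upMul (triangleFam x y) A) (triangleFam x y) := by
    rw [h]
    exact Or.inl subset_rfl
  obtain ⟨A₁, hA₁, hA₁xy⟩ := mem_upMul.1 hxy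
  obtain ⟨A₂, hA₂, hA₂A₁⟩ := mem_upMul.1 hA₁
  obtain ⟨s, hsA₂, hsT, -⟩ := exists_mem_triangle_ne_of_mem_triangleFam hx hnx hny hA₂ x
  obtain ⟨C, hC, hCA₁⟩ := hA₂A₁ s hsA₂
  obtain ⟨c, hcC⟩ := hA.2.1 C hC
  obtain ⟨B, hB, hBxy⟩ := hA₁xy (s * c) (hCA₁ c hcC)
  obtain ⟨b, hbB, hbT, hbs⟩ := exists_mem_triangle_ne_of_mem_triangleFam hx hnx hny hB s
  have ht : s * c * b ∈ ({x, y} : Set X) := hBxy b hbB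
  have htT : s * c * b ∈ ({x, y, x * y} : Set X) := ht.imp_right Or.inl
  have htz : s * c * b ≠ x * y := by
    rcases ht with h | h <;> rw [h]
    exacts [hnx.symm, hny.symm]
  have hst : s * (s * c * b) = s * c * b := by
    rw [← mul_assoc, ← mul_assoc, (isIdempotentElem_of_mem_triangle hx hy hc hsT).eq]
  have htb : s * c * b * b = s * c * b :=
    (isIdempotentElem_of_mem_triangle hx hy hc hbT).mul_mul_self (s * c)
  have hs : s = s * c * b := by
    by_contra hne
    exact htz (hst ▸ mul_eq_of_mem_triangle_of_ne hx hy hc hsT htT hne)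
  have hb : b = s * c * b := by
    by_contra hne
    exact htz (htb ▸ mul_eq_of_mem_triangle_of_ne hx hy hc htT hbT (Ne.symm hne))
  exact hbs (hb.trans hs.symm)

end Triangle

/-- Claim 6.3 (key computation): if `x, y` are commuting idempotents of a semigroup `X`
with `xy ∉ {x,y}`, then the linked upfamily `𝓛 = ⟨{x,y},{x,xy},{y,xy}⟩` satisfies
`𝓛 ≠ 𝓛*𝓛 = ⟨{xy}⟩ = 𝓛*𝓛*𝓛`, and `𝓛` is not a regular element of `υ(X)`. -/
theorem triangle_of_incomparable_idempotents_not_regular {X : Type*} [Semigroup X]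
    (x y : X) (hx : x * x = x) (hy : y * y = y) (hc : x * y = y * x)
    (hnx : x * y ≠ x) (hny : x * y ≠ y) :
    IsUpfamily (triangleFam x y) ∧
      (∀ A ∈ triangleFam x y, ∀ B ∈ triangleFam x y, (A ∩ B).Nonempty) ∧
      triangleFam x y ≠ upMul (triangleFam x y) (triangleFam x y) ∧
      upMul (triangleFam x y) (triangleFam x y) = {A : Set X | x * y ∈ A} ∧
      upMul (upMul (triangleFam x y) (triangleFam x y)) (triangleFam x y) =
        {A : Set X | x * y ∈ A} ∧
      ¬∃ A : Set (Set X), IsUpfamily A ∧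
        upMul (upMul (triangleFam x y) A) (triangleFam x y) = triangleFam x y := by
  have hsq := upMul_triangleFam_self hx hy hc hnx hny
  refine ⟨isUpfamily_triangleFam x y, triangleFam_linked x y,
    triangleFam_ne_upMul_self hx hy hc hnx hny, hsq, ?_, ?_⟩
  · rw [hsq]
    exact upMul_setOf_mem_triangleFam hx hy hc hnx hny
  · rintro ⟨A, hA, h⟩
    exact upMul_upMul_triangleFam_ne hx hy hc hnx hny hA h
end
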